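/- For every integer N ≥ 1, the ratio of MRC to SC coding gains r(N) = (2^{2 − 2/N}/N)·(N!)^{2/N} satisfies r(1) = 1 and r(N) is strictly greater than 1 for all N ≥ 2. -/

import Mathlib

open Real

noncomputable def mrcScRatio (N : ℕ) : ℝ :=
  (2 : ℝ) ^ ((2 : ℝ) - 2 / N) / N * ((Nat.factorial N : ℝ)) ^ ((2 : ℝ) / N)

/-!
Raising to the `N`-th power, `(N · r(N))^N = 2^(2N-2) · (N!)^2`, so `r(N) > 1` amounts to
`N^N < 2^(2N-2) · (N!)^2`. Pairing the factors of `N! · N!` as `(k+1)(N-k) ≥ N` gives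
`N^N ≤ (N!)^2`, and `2^(2N-2) > 1` once `N ≥ 2`.
-/

open Nat Finset

theorem Nat.pow_self_le_factorial_sq (n : ℕ) : n ^ n ≤ n ! ^ 2 := by
  have hprod : n ! ^ 2 = ∏ k ∈ range n, (k + 1) * (n - k) := by
    rw [prod_mul_distrib, sq, ← prod_range_add_one_eq_factorial, ← prod_range_reflect]
    refine congrArg _ (prod_congr rfl fun k hk => ?_)
    have := mem_range.mp hk
    omega
  have hfactor : ∀ k ∈ range n, n ≤ (k + 1) * (n - k) := fun k hk => by
    -- `(k + 1) * (n - k) = n + k * (n - k - 1)`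
    obtain ⟨m, rfl⟩ := Nat.exists_eq_add_of_lt (mem_range.mp hk)
    rw [show k + m + 1 - k = m + 1 by omega]
    nlinarith
  calc n ^ n = ∏ _k ∈ range n, n := by rw [prod_const, card_range]
    _ ≤ n ! ^ 2 := hprod ▸ prod_le_prod' hfactor

theorem Nat.pow_self_lt_two_pow_mul_factorial_sq {n : ℕ} (hn : 2 ≤ n) :
    n ^ n < 2 ^ (2 * n - 2) * n ! ^ 2 :=
  calc n ^ n ≤ n ! ^ 2 := n.pow_self_le_factorial_sq
    _ < 2 ^ (2 * n - 2) * n ! ^ 2 :=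
      lt_mul_left (by positivity) (Nat.one_lt_two_pow (by omega))

theorem Real.rpow_div_natCast_pow {x : ℝ} (hx : 0 ≤ x) (a : ℝ) {n : ℕ} (hn : n ≠ 0) :
    (x ^ (a / n)) ^ n = x ^ a := by
  rw [← rpow_natCast, ← rpow_mul hx, div_mul_cancel₀ a (by exact_mod_cast hn)]

theorem mrcScRatio_mul_pow {N : ℕ} (hN : N ≠ 0) :
    (N * mrcScRatio N) ^ N = 2 ^ (2 * N - 2) * (N ! : ℝ) ^ 2 := by
  have hN' : (N : ℝ) ≠ 0 := by exact_mod_cast hN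
  have hexp : (2 : ℝ) - 2 / N = ((2 * N - 2 : ℕ) : ℝ) / N := by
    rw [Nat.cast_sub (by omega)]
    field_simp
    push_cast
    ring
  have hmul : N * mrcScRatio N =
      2 ^ (((2 * N - 2 : ℕ) : ℝ) / N) * (N ! : ℝ) ^ ((2 : ℕ) / N : ℝ) := by
    rw [mrcScRatio, hexp, Nat.cast_ofNat]
    field_simp
  rw [hmul, mul_pow, rpow_div_natCast_pow zero_le_two _ hN,
    rpow_div_natCast_pow (by positivity) _ hN, rpow_natCast, rpow_natCast]

/-- r(1) = 1 and r(N) > 1 for all N ≥ 2. -/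
theorem mrcScRatio_props :
    mrcScRatio 1 = 1 ∧ ∀ N : ℕ, 2 ≤ N → 1 < mrcScRatio N := by
  refine ⟨by simp [mrcScRatio], fun N hN => ?_⟩
  have hN0 : (0 : ℝ) < N := by positivity
  have hpow : (N : ℝ) ^ N < (N * mrcScRatio N) ^ N := by
    rw [mrcScRatio_mul_pow (by omega)]
    exact_mod_cast Nat.pow_self_lt_two_pow_mul_factorial_sq hN
  have hlt := lt_of_pow_lt_pow_left₀ N (by unfold mrcScRatio; positivity) hpow
  exact (lt_mul_iff_one_lt_right hN0).mp hlt
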